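/- arXiv:1004.0746 — 6 statements merged into one kernel-verified Lean document; each statement's English description precedes it below -/
import Mathlib

section
/- Let m = 4a+3 with a ≥ 0. In the polynomial relation Σ_{0 ≤ i ≤ m/2} C(m−i, i) x₁^{m−2i} x₂^i = 0 over 𝔽₂, every binomial coefficient C(m−i, i) with i ≢ 0 (mod 4) is even; consequently the relation is equivalent to x₁^{4a+3} = Σ_{j=1}^{⌊a/2⌋} C(a−j, j) x₁^{4(a−2j)+3} x₂^{4j} in 𝔽₂[x₁, x₂]. -/
open MvPolynomial Finset

/-!
Lucas's theorem read in base 4 gives `C(4n + s, 4k + t) ≡ C(n, k) C(s, t) (mod 2)` for `s, t < 4`.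
Writing `i = 4q + r`, the coefficient `C(4a + 3 - i, i)` becomes `C(a - q, q) C(3 - r, r)`, and
`C(3 - r, r)` is `1, 2, 0, 0` for `r = 0, 1, 2, 3`. So only the terms with `4 ∣ i` survive in
characteristic `2`, and they carry the coefficients `C(a - j, j)`.
-/

namespace Choose

theorem choose_pow_mul_add_pow_mul_add_modEq {p : ℕ} [Fact p.Prime] (r : ℕ) {n k s t : ℕ}
    (hs : s < p ^ r) (ht : t < p ^ r) :
    Nat.choose (p ^ r * n + s) (p ^ r * k + t) ≡ Nat.choose n k * Nat.choose s t [MOD p] := by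
  induction r generalizing s t with
  | zero => simp_all [Nat.ModEq.refl]
  | succ r ih =>
    have hp : 0 < p := (Fact.out : p.Prime).pos
    rw [pow_succ'] at hs ht ⊢
    have hmod (u x : ℕ) : (p * p ^ r * x + u) % p = u % p := by
      rw [mul_assoc, Nat.mul_add_mod]
    have hdiv (u x : ℕ) : (p * p ^ r * x + u) / p = p ^ r * x + u / p := by
      rw [mul_assoc, Nat.mul_add_div hp]
    calc Nat.choose (p * p ^ r * n + s) (p * p ^ r * k + t)
        ≡ Nat.choose (s % p) (t % p) * Nat.choose (p ^ r * n + s / p) (p ^ r * k + t / p)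
          [MOD p] := by
          rw [← hmod s n, ← hmod t k, ← hdiv s n, ← hdiv t k]
          exact choose_modEq_choose_mod_mul_choose_div_nat
      _ ≡ Nat.choose (s % p) (t % p) * (Nat.choose n k * Nat.choose (s / p) (t / p)) [MOD p] :=
          (ih (Nat.div_lt_of_lt_mul hs) (Nat.div_lt_of_lt_mul ht)).mul_left _
      _ = Nat.choose n k * (Nat.choose (s % p) (t % p) * Nat.choose (s / p) (t / p)) := by ring
      _ ≡ Nat.choose n k * Nat.choose s t [MOD p] :=
          (choose_modEq_choose_mod_mul_choose_div_nat (p := p)).symm.mul_left _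

theorem choose_four_mul_add_modEq {n k s t : ℕ} (hs : s < 4) (ht : t < 4) :
    Nat.choose (4 * n + s) (4 * k + t) ≡ Nat.choose n k * Nat.choose s t [MOD 2] :=
  haveI : Fact (Nat.Prime 2) := ⟨Nat.prime_two⟩
  choose_pow_mul_add_pow_mul_add_modEq 2 hs ht

theorem two_dvd_choose_four_mul_add_three_sub {a i : ℕ} (hi : i ≤ 4 * a + 3) (hi4 : i % 4 ≠ 0) :
    2 ∣ Nat.choose (4 * a + 3 - i) i := by
  obtain ⟨q, r, hr, rfl⟩ : ∃ q r, r < 4 ∧ i = 4 * q + r :=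
    ⟨i / 4, i % 4, Nat.mod_lt _ (by norm_num), (Nat.div_add_mod i 4).symm⟩
  have hsplit : 4 * a + 3 - (4 * q + r) = 4 * (a - q) + (3 - r) := by omega
  rw [hsplit, Nat.dvd_iff_mod_eq_zero, choose_four_mul_add_modEq (by omega) hr, Nat.mul_mod]
  have : r = 1 ∨ r = 2 ∨ r = 3 := by omega
  rcases this with rfl | rfl | rfl <;> simp

theorem choose_four_mul_add_three_sub_four_mul_modEq {a j : ℕ} (hj : j ≤ a) :
    Nat.choose (4 * a + 3 - 4 * j) (4 * j) ≡ Nat.choose (a - j) j [MOD 2] := by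
  have hsplit : 4 * a + 3 - 4 * j = 4 * (a - j) + 3 := by omega
  simpa [hsplit] using choose_four_mul_add_modEq (n := a - j) (k := j) (s := 3) (t := 0)
    (by norm_num) (by norm_num)

end Choose

theorem Finset.sum_range_succ_eq_sum_range_div_mul {M : Type*} [AddCommMonoid M] {k : ℕ}
    (hk : 0 < k) (n : ℕ) {f : ℕ → M} (hf : ∀ i, ¬ k ∣ i → f i = 0) :
    ∑ i ∈ range (n + 1), f i = ∑ j ∈ range (n / k + 1), f (k * j) := by
  rw [← sum_image (g := (k * ·)) fun x _ y _ h => Nat.eq_of_mul_eq_mul_left hk h]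
  refine (sum_subset ?_ ?_).symm
  · intro i hi
    simp only [mem_image, mem_range] at hi ⊢
    obtain ⟨j, hj, rfl⟩ := hi
    have := (Nat.le_div_iff_mul_le hk).1 (Nat.lt_succ_iff.1 hj)
    rw [Nat.mul_comm] at this
    omega
  · intro i hi hni
    refine hf i fun ⟨j, hij⟩ => hni ?_
    simp only [mem_image, mem_range] at hi ⊢
    exact ⟨j, Nat.lt_succ_of_le ((Nat.le_div_iff_mul_le hk).2 (by rw [mul_comm]; omega)), hij.symm⟩

theorem sum_choose_four_mul_add_three_charTwo {R : Type*} [CommRing R] [CharP R 2] (a : ℕ)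
    (x y : R) :
    ∑ i ∈ range (2 * a + 2), (Nat.choose (4 * a + 3 - i) i : R) * x ^ (4 * a + 3 - 2 * i) * y ^ i
      = x ^ (4 * a + 3) + ∑ j ∈ Icc 1 (a / 2),
          (Nat.choose (a - j) j : R) * x ^ (4 * (a - 2 * j) + 3) * y ^ (4 * j) := by
  have hdiv : (2 * a + 1) / 4 = a / 2 := by omega
  rw [sum_range_succ_eq_sum_range_div_mul (by norm_num : 0 < 4) (2 * a + 1), hdiv, range_eq_Ico,
    sum_eq_sum_Ico_succ_bot (by omega), Ico_add_one_right_eq_Icc]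
  · congr 1
    · simp
    refine sum_congr rfl fun j hj => ?_
    have hj : j ≤ a / 2 := (mem_Icc.1 hj).2
    have hexp : 4 * a + 3 - 2 * (4 * j) = 4 * (a - 2 * j) + 3 := by omega
    rw [hexp, (CharP.natCast_eq_natCast R 2).2
      (Choose.choose_four_mul_add_three_sub_four_mul_modEq (by omega))]
  · intro i hi4
    rw [(CharP.cast_eq_zero_iff R 2 _).2]
    · simp
    by_cases hi : i ≤ 4 * a + 3
    · exact Choose.two_dvd_choose_four_mul_add_three_sub hi (by omega)
    · simp [Nat.choose_eq_zero_of_lt (by omega : 4 * a + 3 - i < i)]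

/-- For `m = 4a+3`: in `Σ_{0 ≤ i ≤ m/2} C(m−i,i) x₁^{m−2i} x₂^i = 0` over `𝔽₂`,
every binomial coefficient `C(m−i,i)` with `i ≢ 0 (mod 4)` is even; moreover
`C(m−4j, 4j) ≡ C(a−j, j) (mod 2)`, and consequently the relation is equivalent to
`x₁^{4a+3} = Σ_{j=1}^{⌊a/2⌋} C(a−j,j) x₁^{4(a−2j)+3} x₂^{4j}` in `𝔽₂[x₁,x₂]`. -/
theorem stmt5 (a : ℕ) (m : ℕ) (hm : m = 4 * a + 3) :
    (∀ i : ℕ, i ≤ m / 2 → i % 4 ≠ 0 → 2 ∣ Nat.choose (m - i) i) ∧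
    (∀ j : ℕ, 4 * j ≤ m / 2 →
      Nat.choose (m - 4 * j) (4 * j) % 2 = Nat.choose (a - j) j % 2) ∧
    (∑ i ∈ Finset.range (m / 2 + 1),
        (C ((Nat.choose (m - i) i : ℕ) : ZMod 2)) * (X 0) ^ (m - 2 * i) * (X 1) ^ i
      = (X 0 : MvPolynomial (Fin 2) (ZMod 2)) ^ (4 * a + 3)
        + ∑ j ∈ Finset.Icc 1 (a / 2),
            (C ((Nat.choose (a - j) j : ℕ) : ZMod 2))
              * (X 0) ^ (4 * (a - 2 * j) + 3) * (X 1) ^ (4 * j)) := by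
  subst hm
  have hhalf : (4 * a + 3) / 2 = 2 * a + 1 := by omega
  refine ⟨fun i hi hi4 => Choose.two_dvd_choose_four_mul_add_three_sub (by omega) hi4,
    fun j hj => Choose.choose_four_mul_add_three_sub_four_mul_modEq (by omega), ?_⟩
  simpa only [hhalf, map_natCast] using sum_choose_four_mul_add_three_charTwo a (X 0) (X 1)
end

section
/- Let m = 4a+3. For every integer i with 0 ≤ i ≤ (m+1)/2 and i ≡ 3 (mod 4), the binomial coefficient C(m+1−i, i) = C(4a+4−i, i) is even. -/
/-- For `m = 4a+3`, every binomial coefficient `C(m+1-i, i) = C(4a+4-i, i)` with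
`0 ≤ i ≤ (m+1)/2` and `i ≡ 3 (mod 4)` is even. -/
theorem stmt6 (a : ℕ) (i : ℕ) (hi : i ≤ (4 * a + 3 + 1) / 2) (hmod : i % 4 = 3) :
    2 ∣ Nat.choose (4 * a + 4 - i) i := by
  obtain ⟨t, rfl⟩ : ∃ t, i = 4 * t + 3 := ⟨i / 4, by omega⟩
  have ht : t ≤ a := by omega
  have hn : 4 * a + 4 - (4 * t + 3) = 4 * (a - t) + 1 := by omega
  rw [hn]
  haveI : Fact (Nat.Prime 2) := ⟨Nat.prime_two⟩
  have h1 := Choose.choose_modEq_choose_mod_mul_choose_div_nat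
    (p := 2) (n := 4 * (a - t) + 1) (k := 4 * t + 3)
  have h2 := Choose.choose_modEq_choose_mod_mul_choose_div_nat
    (p := 2) (n := (4 * (a - t) + 1) / 2) (k := (4 * t + 3) / 2)
  have e1 : (4 * (a - t) + 1) / 2 = 2 * (a - t) := by omega
  have e2 : (4 * t + 3) / 2 = 2 * t + 1 := by omega
  rw [e1, e2] at h2
  have e3 : (2 * (a - t)) % 2 = 0 := by omega
  have e4 : (2 * t + 1) % 2 = 1 := by omega
  rw [e3, e4, Nat.choose_zero_succ, zero_mul] at h2
  have hd2 : 2 ∣ Nat.choose (2 * (a - t)) (2 * t + 1) :=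
    (Nat.modEq_zero_iff_dvd).mp h2
  rw [e1, e2] at h1
  have : 2 ∣ Nat.choose ((4 * (a - t) + 1) % 2) ((4 * t + 3) % 2) *
      Nat.choose (2 * (a - t)) (2 * t + 1) := hd2.mul_left _
  exact (Nat.modEq_zero_iff_dvd).mp (h1.trans ((Nat.modEq_zero_iff_dvd).mpr this))
end

section
/- Let R = ℤ[x₂, y₂, z₃]/(2x₂, 2y₂, 2z₃, z₃² − x₂y₂(x₂+y₂)) be the integral cohomology ring of ℝP^∞ × ℝP^∞, graded with |x₂| = |y₂| = 2 and |z₃| = 3. Then for i > 0, the degree-i component of R is an elementary abelian 2-group of rank i/2 + 1 if i is even and rank (i−1)/2 if i is odd, and the degree-0 component is ℤ. -/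
/-!
Modulo `z² = xy(x + y)` every monomial is a sum of monomials `x^a y^b z^r` with `r < 2` of the
same degree, so each graded piece is spanned by these normal monomials, and in positive degree
each of them is killed by `2`. They are independent over `𝔽₂`: the ring map to `𝔽₂[u, v]` given
by `x ↦ u², y ↦ v², z ↦ uv(u + v)` sends `x^a y^b z^r` to a polynomial containing
`u^(2a+r) v^(2b+2r)`, a monomial occurring in the image of no other normal monomial of that
degree. In degree `0` the augmentation `x, y, z ↦ 0` splits off `ℤ`.
-/

open MvPolynomial

theorem zsmul_eq_val_intCast_smul {M : Type*} [AddCommGroup M] {v : M} (hv : (2 : ℤ) • v = 0)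
    (c : ℤ) : c • v = (c : ZMod 2).val • v := by
  calc c • v = (c % 2 + 2 * (c / 2)) • v := by rw [Int.emod_add_mul_ediv]
    _ = (c % 2) • v := by rw [add_zsmul, mul_comm, mul_zsmul, hv, zsmul_zero, add_zero]
    _ = (c : ZMod 2).val • v := by rw [← natCast_zsmul, ZMod.val_intCast, Nat.cast_ofNat]

theorem Submodule.nonempty_addEquiv_pi_zmod_two {M ι : Type*} [AddCommGroup M] [Fintype ι]
    [DecidableEq ι] {N : Submodule ℤ M} {v : ι → M} (hN : N = span ℤ (Set.range v))
    (hv : ∀ j, (2 : ℤ) • v j = 0) (Φ : M →+ (ι → ZMod 2)) (hΦ : ∀ j, Φ (v j) = Pi.single j 1) :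
    Nonempty (N ≃+ (ι → ZMod 2)) := by
  subst hN
  have hΦsum (t : ι → ℕ) : Φ (∑ j, t j • v j) = fun j => (t j : ZMod 2) := by
    ext j; simp [map_nsmul, hΦ, Pi.single_apply]
  have hmem (t : ι → ℕ) : ∑ j, t j • v j ∈ span ℤ (Set.range v) :=
    sum_mem fun j _ => nsmul_mem (subset_span (Set.mem_range_self j)) _
  have hrepr (x : span ℤ (Set.range v)) : (x : M) = ∑ j, (Φ x j).val • v j := by
    obtain ⟨c, hc⟩ := (mem_span_range_iff_exists_fun ℤ).mp x.2
    simp_rw [← hc, fun j => zsmul_eq_val_intCast_smul (hv j) (c j), hΦsum, ZMod.natCast_zmod_val]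
  exact ⟨{ toFun := fun x => Φ x
           invFun := fun t => ⟨∑ j, (t j).val • v j, hmem _⟩
           left_inv := fun x => Subtype.ext (hrepr x).symm
           right_inv := fun t => by simp only [hΦsum, ZMod.natCast_zmod_val]
           map_add' := fun x y => map_add Φ (x : M) y }⟩

theorem MvPolynomial.weightedHomogeneousSubmodule_eq_span_monomial {R σ M : Type*}
    [CommSemiring R] [AddCommMonoid M] (w : σ → M) (m : M) :
    weightedHomogeneousSubmodule R w m =
      Submodule.span R ((fun d => monomial d 1) '' {d | Finsupp.weight w d = m}) := by
  rw [weightedHomogeneousSubmodule_eq_finsupp_supported, AddMonoidAlgebra.supported_eq_span_single]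
  rfl

theorem Submodule.nonempty_linearEquiv_int_of_eq_span_singleton {M : Type*} [AddCommGroup M]
    {N : Submodule ℤ M} {v : M} (hN : N = span ℤ {v}) (f : M →+ ℤ) (hf : f v = 1) :
    Nonempty (N ≃ₗ[ℤ] ℤ) := by
  have hinj : Function.Injective (LinearMap.toSpanSingleton ℤ M v) := fun m n h => by
    simpa [hf] using congrArg f h
  subst hN
  exact ⟨(LinearEquiv.ofEq _ _ (LinearMap.span_singleton_eq_range ℤ M v)).trans
    (LinearEquiv.ofInjective _ hinj).symm⟩

noncomputable section

namespace RPInftySq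

abbrev rel : Ideal (MvPolynomial (Fin 3) ℤ) :=
  Ideal.span {2 * X 0, 2 * X 1, 2 * X 2, (X 2) ^ 2 - X 0 * X 1 * (X 0 + X 1)}

abbrev H : Type := MvPolynomial (Fin 3) ℤ ⧸ rel

abbrev mk : MvPolynomial (Fin 3) ℤ →+* H := Ideal.Quotient.mk rel

def mon (a b c : ℕ) : MvPolynomial (Fin 3) ℤ := X 0 ^ a * X 1 ^ b * X 2 ^ c

theorem weight_eq (d : Fin 3 →₀ ℕ) : Finsupp.weight ![2, 2, 3] d = 2 * d 0 + 2 * d 1 + 3 * d 2 := by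
  simp [Finsupp.weight_apply, Finsupp.sum_fintype, Fin.sum_univ_three, mul_comm]

theorem monomial_eq_mon (d : Fin 3 →₀ ℕ) : monomial d (1 : ℤ) = mon (d 0) (d 1) (d 2) := by
  simp [monomial_eq, Finsupp.prod_fintype, Fin.prod_univ_three, mon]

theorem mon_mem_weightedHomogeneousSubmodule (a b c : ℕ) :
    mon a b c ∈ weightedHomogeneousSubmodule ℤ ![2, 2, 3] (2 * a + 2 * b + 3 * c) := by
  have h := (((isWeightedHomogeneous_X ℤ ![2, 2, 3] 0).pow a).mul
    ((isWeightedHomogeneous_X ℤ ![2, 2, 3] 1).pow b)).mul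
    ((isWeightedHomogeneous_X ℤ ![2, 2, 3] 2).pow c)
  rw [mem_weightedHomogeneousSubmodule, mon]
  convert h using 1
  simp only [Matrix.cons_val, smul_eq_mul]; ring

theorem mk_mon_add_two (a b c : ℕ) :
    mk (mon a b (c + 2)) = mk (mon (a + 2) (b + 1) c) + mk (mon (a + 1) (b + 2) c) := by
  rw [← map_add, Ideal.Quotient.mk_eq_mk_iff_sub_mem]
  have : mon a b (c + 2) - (mon (a + 2) (b + 1) c + mon (a + 1) (b + 2) c) =
      mon a b c * (X 2 ^ 2 - X 0 * X 1 * (X 0 + X 1)) := by simp only [mon]; ring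
  rw [this]
  exact Ideal.mul_mem_left _ _ (Ideal.subset_span (by simp))

theorem two_mul_mon_mem {a b c : ℕ} (h : 0 < a + b + c) : 2 * mon a b c ∈ rel := by
  obtain ⟨j, e, he⟩ : ∃ j : Fin 3, ∃ e, mon a b c = X j * e := by
    rcases a with _ | a
    · rcases b with _ | b
      · rcases c with _ | c
        · omega
        · exact ⟨2, mon 0 0 c, by simp only [mon]; ring⟩
      · exact ⟨1, mon 0 b c, by simp only [mon]; ring⟩
    · exact ⟨0, mon a b c, by simp only [mon]; ring⟩
  rw [he, ← mul_assoc]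
  exact Ideal.mul_mem_right _ _ (Ideal.subset_span (by fin_cases j <;> simp))

/-- `x ^ a * y ^ (k - 1 - a) * z ^ r`: for `r < 2` these are the `k` normal monomials of
degree `2 * (k - 1) + 3 * r`. -/
def normalMonomial (r k : ℕ) (a : Fin k) : H := mk (mon a (k - 1 - a) r)

theorem mk_mon_mem_span_normalMonomial (r a b m : ℕ) :
    mk (mon a b (r + 2 * m)) ∈
      Submodule.span ℤ (Set.range (normalMonomial r (a + b + 3 * m + 1))) := by
  induction m generalizing a b with
  | zero => exact Submodule.subset_span ⟨⟨a, by omega⟩, by simp [normalMonomial]⟩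
  | succ m ih =>
    rw [show r + 2 * (m + 1) = r + 2 * m + 2 by ring, mk_mon_add_two]
    refine add_mem ?_ ?_
    · rw [show a + b + 3 * (m + 1) + 1 = a + 2 + (b + 1) + 3 * m + 1 by ring]; exact ih _ _
    · rw [show a + b + 3 * (m + 1) + 1 = a + 1 + (b + 2) + 3 * m + 1 by ring]; exact ih _ _

theorem map_mk_weightedHomogeneousSubmodule {r k i : ℕ} (hr : r < 2) (hi : 2 * k + 3 * r = i + 2) :
    Submodule.map (Ideal.Quotient.mkₐ ℤ rel).toLinearMap
      (weightedHomogeneousSubmodule ℤ ![2, 2, 3] i) =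
      Submodule.span ℤ (Set.range (normalMonomial r k)) := by
  apply le_antisymm
  · rw [weightedHomogeneousSubmodule_eq_span_monomial, Submodule.map_span, Submodule.span_le]
    rintro _ ⟨_, ⟨d, hd, rfl⟩, rfl⟩
    replace hd : 2 * d 0 + 2 * d 1 + 3 * d 2 = i := (weight_eq d).symm.trans hd
    obtain ⟨m, hm⟩ : ∃ m, d 2 = r + 2 * m := ⟨d 2 / 2, by omega⟩
    have h := mk_mon_mem_span_normalMonomial r (d 0) (d 1) m
    rw [show d 0 + d 1 + 3 * m + 1 = k by omega, ← hm] at h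
    simpa [monomial_eq_mon] using h
  · rw [Submodule.span_le]
    rintro _ ⟨a, rfl⟩
    refine ⟨mon a (k - 1 - a) r, ?_, rfl⟩
    have := a.isLt
    rw [show i = 2 * a + 2 * (k - 1 - a) + 3 * r by omega]
    exact mon_mem_weightedHomogeneousSubmodule _ _ _

theorem frobenius_relation :
    (X 0 * X 1 * (X 0 + X 1) : MvPolynomial (Fin 2) (ZMod 2)) ^ 2 =
      (X 0 ^ 2) * (X 1 ^ 2) * (X 0 ^ 2 + X 1 ^ 2) := by
  linear_combination (X 0 ^ 3 * X 1 ^ 3 : MvPolynomial (Fin 2) (ZMod 2)) *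
    CharTwo.two_eq_zero (R := MvPolynomial (Fin 2) (ZMod 2))

/-- `x ↦ u², y ↦ v², z ↦ uv(u + v)` into `𝔽₂[u, v]`; it kills `z² - xy(x + y)` because squaring
is additive in characteristic 2. -/
def detectPoly : MvPolynomial (Fin 3) ℤ →+* MvPolynomial (Fin 2) (ZMod 2) :=
  (aeval ![X 0 ^ 2, X 1 ^ 2, X 0 * X 1 * (X 0 + X 1)]).toRingHom

theorem rel_le_ker_detectPoly : rel ≤ RingHom.ker detectPoly := by
  rw [Ideal.span_le]
  rintro _ (rfl | rfl | rfl | rfl) <;>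
    simp [RingHom.mem_ker, detectPoly, CharTwo.two_eq_zero, frobenius_relation]

def detect : H →+* MvPolynomial (Fin 2) (ZMod 2) :=
  Ideal.Quotient.lift rel detectPoly fun _ hp => rel_le_ker_detectPoly hp

def expPair (p q : ℕ) : Fin 2 →₀ ℕ := Finsupp.single 0 p + Finsupp.single 1 q

theorem expPair_inj {p q p' q' : ℕ} : expPair p q = expPair p' q' ↔ p = p' ∧ q = q' := by
  simp [expPair, Finsupp.ext_iff, Fin.forall_fin_two]

theorem X_pow_mul_X_pow_eq_monomial (p q : ℕ) :
    (X 0 ^ p * X 1 ^ q : MvPolynomial (Fin 2) (ZMod 2)) = monomial (expPair p q) 1 := by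
  rw [X_pow_eq_monomial, X_pow_eq_monomial, monomial_mul, one_mul, expPair]

theorem detect_mk_mon_zero (a b : ℕ) :
    detect (mk (mon a b 0)) = monomial (expPair (2 * a) (2 * b)) 1 := by
  simp [detect, detectPoly, mon, ← pow_mul, X_pow_mul_X_pow_eq_monomial]

theorem detect_mk_mon_one (a b : ℕ) :
    detect (mk (mon a b 1)) =
      monomial (expPair (2 * a + 2) (2 * b + 1)) 1 +
        monomial (expPair (2 * a + 1) (2 * b + 2)) 1 := by
  simp only [detect, detectPoly, mon, ← X_pow_mul_X_pow_eq_monomial, AlgHom.toRingHom_eq_coe,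
    Ideal.Quotient.lift_mk, RingHom.coe_coe, map_mul, map_pow, aeval_X, Matrix.cons_val]
  ring

def coordinate (r k : ℕ) : H →+ (Fin k → ZMod 2) :=
  AddMonoidHom.pi fun a => (coeffAddMonoidHom (expPair (2 * a + r) (2 * (k - 1 - a) + 2 * r))).comp
    detect.toAddMonoidHom

theorem coordinate_normalMonomial {r k : ℕ} (hr : r < 2) (a : Fin k) :
    coordinate r k (normalMonomial r k a) = Pi.single a 1 := by
  ext a'
  have := a.isLt
  have := a'.isLt
  simp only [coordinate, AddMonoidHom.pi_apply, AddMonoidHom.comp_apply, coeffAddMonoidHom_apply,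
    RingHom.toAddMonoidHom_eq_coe, AddMonoidHom.coe_coe, normalMonomial, Pi.single_apply,
    Fin.ext_iff]
  interval_cases r
  · simp only [detect_mk_mon_zero, coeff_monomial, expPair_inj]
    split_ifs <;> first | rfl | (exfalso; omega)
  · simp only [detect_mk_mon_one, coeff_add, coeff_monomial, expPair_inj]
    split_ifs <;> first | rfl | (exfalso; omega)

theorem two_zsmul_normalMonomial {r k : ℕ} (h : 0 < k - 1 + r) (a : Fin k) :
    (2 : ℤ) • normalMonomial r k a = 0 := by
  have := a.isLt
  rw [zsmul_eq_mul, Int.cast_ofNat, normalMonomial, ← map_ofNat mk 2, ← map_mul,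
    Ideal.Quotient.eq_zero_iff_mem]
  exact two_mul_mon_mem (by omega)

def augmentation : H →+* ℤ :=
  Ideal.Quotient.lift rel constantCoeff fun p hp => by
    refine (Ideal.span_le (I := RingHom.ker constantCoeff)).mpr ?_ hp
    rintro _ (rfl | rfl | rfl | rfl) <;> simp [RingHom.mem_ker]

end RPInftySq

open RPInftySq

/-- The integral cohomology ring of `ℝP^∞ × ℝP^∞` is
`R = ℤ[x₂,y₂,z₃]/(2x₂, 2y₂, 2z₃, z₃² − x₂y₂(x₂+y₂))`, graded with
`|x₂| = |y₂| = 2`, `|z₃| = 3`.  Its degree-0 component is `ℤ`, and for `i > 0`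
its degree-`i` component is an elementary abelian 2-group of rank `i/2 + 1`
for even `i` and of rank `(i−1)/2` for odd `i`. -/
theorem stmt7
    (I : Ideal (MvPolynomial (Fin 3) ℤ))
    (hI : I = Ideal.span
      {2 * X 0, 2 * X 1, 2 * X 2, (X 2) ^ 2 - X 0 * X 1 * (X 0 + X 1)})
    (w : Fin 3 → ℕ) (hw : w = ![2, 2, 3])
    (comp : ℕ → Submodule ℤ (MvPolynomial (Fin 3) ℤ ⧸ I))
    (hcomp : ∀ i, comp i = Submodule.map (Ideal.Quotient.mkₐ ℤ I).toLinearMap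
      (weightedHomogeneousSubmodule ℤ w i)) :
    Nonempty ((comp 0) ≃ₗ[ℤ] ℤ) ∧
    (∀ i : ℕ, 0 < i → Even i → Nonempty ((comp i) ≃+ (Fin (i / 2 + 1) → ZMod 2))) ∧
    (∀ i : ℕ, 0 < i → ¬ Even i → Nonempty ((comp i) ≃+ (Fin ((i - 1) / 2) → ZMod 2))) := by
  subst hI hw
  have hspan {r k i : ℕ} (hr : r < 2) (hi : 2 * k + 3 * r = i + 2) :
      comp i = Submodule.span ℤ (Set.range (normalMonomial r k)) :=
    (hcomp i).trans (map_mk_weightedHomogeneousSubmodule hr hi)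
  refine ⟨?_, fun i hi he => ?_, fun i _ ho => ?_⟩
  · have h0 : comp 0 = Submodule.span ℤ {1} := by
      rw [hspan (r := 0) (k := 1) (by norm_num) rfl, Set.range_unique]
      simp [normalMonomial, mon]
    exact Submodule.nonempty_linearEquiv_int_of_eq_span_singleton h0
      augmentation.toAddMonoidHom (map_one augmentation)
  · obtain ⟨n, rfl⟩ := he
    exact Submodule.nonempty_addEquiv_pi_zmod_two (hspan (r := 0) (by norm_num) (by omega))
      (two_zsmul_normalMonomial (by omega)) (coordinate 0 _)
      (coordinate_normalMonomial (by norm_num))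
  · obtain ⟨n, rfl⟩ := Nat.not_even_iff_odd.mp ho
    exact Submodule.nonempty_addEquiv_pi_zmod_two (hspan (r := 1) (by norm_num) (by omega))
      (two_zsmul_normalMonomial (by omega)) (coordinate 1 _)
      (coordinate_normalMonomial (by norm_num))
end
end

section
/- In the graded ring A = 𝔽₂[x, x₁, x₂]/(x² + x·x₁) with |x| = |x₁| = 1, |x₂| = 2, the operation Sq¹ determined by Sq¹(x) = x², Sq¹(x₁) = x₁², Sq¹(x₂) = x₁x₂ and the Cartan formula is a well-defined derivation with Sq¹∘Sq¹ = 0; moreover on a monomial x^i x₁^{i₁} x₂^{i₂} (i ∈ {0,1}) it vanishes when i + i₁ + i₂ is even and equals x^i x₁^{i₁+1} x₂^{i₂} when i + i₁ + i₂ is odd. -/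
/-! `Sq¹` is first defined on `𝔽₂[x, x₁, x₂]` by its values on the variables; it descends to `A`
because `Sq¹(x² + x x₁) = x₁ (x² + x x₁)`. In characteristic two `Sq¹ ∘ Sq¹` is again a
derivation, so it vanishes as soon as it vanishes on the variables. In `A` we have
`Sq¹ x = x² = x₁ x`, so each generator `y` satisfies `Sq¹ y = x₁ y`; hence `Sq¹` multiplies a
monomial of total degree `n` by `n x₁`, and `n = 0` or `1` in `𝔽₂` according to its parity. -/

open MvPolynomial

namespace Derivation

section CommSemiring

variable {R A : Type*} [CommSemiring R] [CommSemiring A] [Algebra R A]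

/-- The cross term `2 • D a * D b` of `D (D (a * b))` vanishes. -/
def compSelf [CharP A 2] (D : Derivation R A A) : Derivation R A A where
  toLinearMap := D.toLinearMap ∘ₗ D.toLinearMap
  map_one_eq_zero' := by simp
  leibniz' a b := by
    have h : D (D (a * b)) = a • D (D b) + b • D (D a) + 2 * (D a * D b) := by
      simp only [leibniz, map_add, smul_eq_mul]
      ring
    simpa [CharTwo.two_eq_zero] using h

@[simp]
theorem compSelf_apply [CharP A 2] (D : Derivation R A A) (a : A) :
    D.compSelf a = D (D a) := rfl

variable {D : Derivation R A A}

theorem map_mem_span_of_forall_mem {s : Set A}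
    (hs : ∀ g ∈ s, D g ∈ Ideal.span s) {a : A} (ha : a ∈ Ideal.span s) :
    D a ∈ Ideal.span s := by
  induction ha using Submodule.span_induction with
  | mem g hg => exact hs g hg
  | zero => simp
  | add a b _ _ ha hb => simpa using add_mem ha hb
  | smul c a haI ha =>
    rw [smul_eq_mul, leibniz, smul_eq_mul, smul_eq_mul]
    exact add_mem (Ideal.mul_mem_left _ c ha) (Ideal.mul_mem_right (D c) _ haI)

theorem map_mul_eq_mul_of_eq_mul {a b s t : A} (ha : D a = s * a) (hb : D b = t * b) :
    D (a * b) = (s + t) * (a * b) := by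
  rw [leibniz, ha, hb, smul_eq_mul, smul_eq_mul]
  ring

theorem map_pow_eq_mul_of_eq_mul {a t : A} (ha : D a = t * a) (n : ℕ) :
    D (a ^ n) = (n * t) * a ^ n := by
  induction n with
  | zero => simp
  | succ n ih =>
    rw [pow_succ, map_mul_eq_mul_of_eq_mul ih ha]
    push_cast
    ring

theorem map_pow_mul_pow_mul_pow_of_eq_mul (h2 : (2 : A) = 0) {a b c t : A}
    (ha : D a = t * a) (hb : D b = t * b) (hc : D c = t * c) (i j k : ℕ) :
    D (a ^ i * b ^ j * c ^ k) =
      if Even (i + j + k) then 0 else t * (a ^ i * b ^ j * c ^ k) := by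
  rw [map_mul_eq_mul_of_eq_mul (map_mul_eq_mul_of_eq_mul (map_pow_eq_mul_of_eq_mul ha i)
    (map_pow_eq_mul_of_eq_mul hb j)) (map_pow_eq_mul_of_eq_mul hc k),
    ← add_mul, ← add_mul, ← Nat.cast_add, ← Nat.cast_add]
  split_ifs with h
  · rw [natCast_eq_zero_of_even_of_two_eq_zero h h2, zero_mul, zero_mul]
  · rw [natCast_eq_one_of_odd_of_two_eq_zero (Nat.not_even_iff_odd.1 h) h2, one_mul]

end CommSemiring

section Quotient

variable {R A : Type*} [CommRing R] [CommRing A] [Algebra R A]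
  (I : Ideal A) (D : Derivation R A A) (hD : ∀ a ∈ I, D a ∈ I)

noncomputable def quotient : Derivation R (A ⧸ I) (A ⧸ I) :=
  let L : (A ⧸ I.restrictScalars R) →ₗ[R] A ⧸ I :=
    (I.restrictScalars R).liftQ ((Ideal.Quotient.mkₐ R I).toLinearMap ∘ₗ D.toLinearMap)
      fun a ha => (Submodule.Quotient.mk_eq_zero _).2 (hD a ha)
  have hL (a : A) : L (Ideal.Quotient.mk I a) = Ideal.Quotient.mk I (D a) := rfl
  { toLinearMap := L ∘ₗ (Submodule.Quotient.restrictScalarsEquiv R I).symm.toLinearMap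
    map_one_eq_zero' := by
      change L (Ideal.Quotient.mk I 1) = 0
      rw [hL, map_one_eq_zero, map_zero]
    leibniz' := by
      rintro ⟨a⟩ ⟨b⟩
      change L (Ideal.Quotient.mk I (a * b)) =
        Ideal.Quotient.mk I a • L (Ideal.Quotient.mk I b) +
          Ideal.Quotient.mk I b • L (Ideal.Quotient.mk I a)
      rw [hL, hL, hL, leibniz, map_add, smul_eq_mul, smul_eq_mul, map_mul, map_mul,
        smul_eq_mul, smul_eq_mul] }

@[simp]
theorem quotient_mk (a : A) :
    D.quotient I hD (Ideal.Quotient.mk I a) = Ideal.Quotient.mk I (D a) := rfl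

end Quotient

end Derivation

/-- `Sq¹` on the polynomial ring `𝔽₂[x, x₁, x₂]`, with `x, x₁, x₂` the variables `X 0, X 1, X 2`. -/
noncomputable def sqOnePoly :
    Derivation (ZMod 2) (MvPolynomial (Fin 3) (ZMod 2)) (MvPolynomial (Fin 3) (ZMod 2)) :=
  mkDerivation (ZMod 2) ![X 0 ^ 2, X 1 ^ 2, X 1 * X 2]

@[simp] theorem sqOnePoly_X_zero : sqOnePoly (X 0) = X 0 ^ 2 := mkDerivation_X _ _ 0
@[simp] theorem sqOnePoly_X_one : sqOnePoly (X 1) = X 1 ^ 2 := mkDerivation_X _ _ 1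
@[simp] theorem sqOnePoly_X_two : sqOnePoly (X 2) = X 1 * X 2 := mkDerivation_X _ _ 2

theorem sqOnePoly_compSelf : sqOnePoly.compSelf = 0 := by
  refine derivation_ext fun i => ?_
  fin_cases i
  · simp [Derivation.leibniz_pow, CharTwo.two_eq_zero]
  · simp [Derivation.leibniz_pow, CharTwo.two_eq_zero]
  · have h : sqOnePoly (sqOnePoly (X 2)) = 2 * (X 1 ^ 2 * X 2) := by
      simp only [sqOnePoly_X_two, Derivation.leibniz, sqOnePoly_X_one, smul_eq_mul]
      ring
    simpa [CharTwo.two_eq_zero] using h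

theorem sqOnePoly_relation :
    sqOnePoly (X 0 ^ 2 + X 0 * X 1) = X 1 * (X 0 ^ 2 + X 0 * X 1) := by
  simp only [map_add, Derivation.leibniz, Derivation.leibniz_pow, sqOnePoly_X_zero,
    sqOnePoly_X_one, smul_eq_mul, CharTwo.two_nsmul]
  ring

theorem sqOnePoly_mem_span {p : MvPolynomial (Fin 3) (ZMod 2)}
    (hp : p ∈ Ideal.span {X 0 ^ 2 + X 0 * X 1}) :
    sqOnePoly p ∈ Ideal.span {X 0 ^ 2 + X 0 * X 1} := by
  refine Derivation.map_mem_span_of_forall_mem (fun g hg => ?_) hp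
  rw [Set.mem_singleton_iff.1 hg, sqOnePoly_relation]
  exact Ideal.mul_mem_left _ _ (Ideal.subset_span rfl)

/-- In `A = 𝔽₂[x, x₁, x₂]/(x² + x·x₁)` there is a well-defined derivation `Sq¹`
with `Sq¹(x) = x²`, `Sq¹(x₁) = x₁²`, `Sq¹(x₂) = x₁x₂`, satisfying `Sq¹∘Sq¹ = 0`;
on a monomial `x^i x₁^{i₁} x₂^{i₂}` (with `i ∈ {0,1}`) it vanishes when
`i + i₁ + i₂` is even and equals `x^i x₁^{i₁+1} x₂^{i₂}` when `i + i₁ + i₂`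
is odd. -/
theorem stmt8
    (I : Ideal (MvPolynomial (Fin 3) (ZMod 2)))
    (hI : I = Ideal.span {(X 0) ^ 2 + X 0 * X 1})
    (x x₁ x₂ : MvPolynomial (Fin 3) (ZMod 2) ⧸ I)
    (hx : x = Ideal.Quotient.mk I (X 0))
    (hx₁ : x₁ = Ideal.Quotient.mk I (X 1))
    (hx₂ : x₂ = Ideal.Quotient.mk I (X 2)) :
    ∃ D : Derivation (ZMod 2) (MvPolynomial (Fin 3) (ZMod 2) ⧸ I)
        (MvPolynomial (Fin 3) (ZMod 2) ⧸ I),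
      D x = x ^ 2 ∧ D x₁ = x₁ ^ 2 ∧ D x₂ = x₁ * x₂ ∧
      (∀ u, D (D u) = 0) ∧
      (∀ i i₁ i₂ : ℕ, i ≤ 1 →
        D (x ^ i * x₁ ^ i₁ * x₂ ^ i₂) =
          if Even (i + i₁ + i₂) then 0 else x ^ i * x₁ ^ (i₁ + 1) * x₂ ^ i₂) := by
  have htwo : (2 : MvPolynomial (Fin 3) (ZMod 2) ⧸ I) = 0 := by
    calc (2 : MvPolynomial (Fin 3) (ZMod 2) ⧸ I) = Ideal.Quotient.mk I 2 := (map_ofNat _ 2).symm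
      _ = Ideal.Quotient.mk I 0 := congrArg _ CharTwo.two_eq_zero
      _ = 0 := map_zero _
  subst hI
  have hrel : x ^ 2 = x₁ * x := by
    rw [hx, hx₁, ← map_pow, ← map_mul, Ideal.Quotient.eq, CharTwo.sub_eq_add, mul_comm]
    exact Ideal.subset_span rfl
  set D := sqOnePoly.quotient _ fun _ => sqOnePoly_mem_span
  have hDx : D x = x ^ 2 := by simp [D, hx]
  have hDx₁ : D x₁ = x₁ ^ 2 := by simp [D, hx₁]
  have hDx₂ : D x₂ = x₁ * x₂ := by simp [D, hx₁, hx₂]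
  refine ⟨D, hDx, hDx₁, hDx₂, fun u => ?_, fun i i₁ i₂ _ => ?_⟩
  · obtain ⟨p, rfl⟩ := Ideal.Quotient.mk_surjective u
    rw [Derivation.quotient_mk, Derivation.quotient_mk, ← Derivation.compSelf_apply,
      sqOnePoly_compSelf, Derivation.zero_apply, map_zero]
  rw [Derivation.map_pow_mul_pow_mul_pow_of_eq_mul htwo (hDx.trans hrel) (hDx₁.trans (sq x₁))
    hDx₂]
  split_ifs <;> ring
end

section
/- Let f : (ℤ/2)^r → G be an injective homomorphism of finite abelian 2-groups where G ≅ (ℤ/2)^s ⊕ ℤ/4, and suppose the cokernel of f has 2-rank at most s + 1 − r. If moreover the image of f does not contain twice the generator of the ℤ/4 summand, then coker(f) ≅ (ℤ/2)^{s−r} ⊕ ℤ/4. -/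
open TensorProduct

lemma baer_zmod4 : Module.Baer (ZMod 4) (ZMod 4) := by
  intro I g
  have hall : ∀ y : ZMod 4, y = 0 ∨ y = 1 ∨ y = 2 ∨ y = 3 := by decide
  by_cases h1 : (1 : ZMod 4) ∈ I
  · refine ⟨g ∘ₗ LinearMap.codRestrict I LinearMap.id
      (fun x => by simpa using I.mul_mem_left x h1), fun x hx => rfl⟩
  · have hmem : ∀ x ∈ I, x = 0 ∨ x = 2 := by
      intro x hx
      rcases hall x with h | h | h | h
      · exact Or.inl h
      · exact absurd (h ▸ hx) h1
      · exact Or.inr h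
      · exfalso
        apply h1
        have : (1 : ZMod 4) = 3 * 3 := by decide
        rw [this]
        exact I.mul_mem_left 3 (h ▸ hx)
    by_cases h2 : (2 : ZMod 4) ∈ I
    · set c := g ⟨2, h2⟩ with hc
      have hcc : c + c = 0 := by
        rw [hc, ← map_add]
        have hxx : (⟨2, h2⟩ : I) + ⟨2, h2⟩ = 0 := by
          apply Subtype.ext
          show (2 : ZMod 4) + 2 = 0
          decide
        rw [hxx, map_zero]
      have hkey : ∀ y : ZMod 4, y + y = 0 → y = 0 ∨ y = 2 := by decide
      have hc02 : c = 0 ∨ c = 2 := hkey c hcc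
      set e : ZMod 4 := if c = 0 then 0 else 1 with he
      refine ⟨LinearMap.toSpanSingleton (ZMod 4) (ZMod 4) e, fun x hx => ?_⟩
      rcases hmem x hx with h | h
      · subst h
        simp only [map_zero]
        have h0 : (⟨(0 : ZMod 4), hx⟩ : I) = 0 := Subtype.ext rfl
        rw [h0, map_zero]
      · subst h
        have : (⟨(2 : ZMod 4), hx⟩ : I) = ⟨2, h2⟩ := rfl
        rw [this, ← hc]
        show (2 : ZMod 4) • e = c
        rcases hc02 with h | h
        · rw [he, if_pos h, smul_zero, h]
        · have he1 : e = 1 := by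
            rw [he, if_neg (by rw [h]; decide)]
          rw [he1, h, smul_eq_mul]
          decide
    · refine ⟨0, fun x hx => ?_⟩
      rcases hmem x hx with h | h
      · subst h
        have h0 : (⟨(0 : ZMod 4), hx⟩ : I) = 0 := Subtype.ext rfl
        rw [h0, map_zero]
        simp
      · exact absurd (h ▸ hx) h2

lemma key_classification (Q : Type) [AddCommGroup Q] [Finite Q] (q0 u : Q)
    (hq0 : q0 ≠ 0) (hu : 2 • u = q0) (h4 : ∀ q : Q, 4 • q = 0)
    (h2 : ∀ q : Q, 2 • q = 0 ∨ 2 • q = q0) :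
    ∃ m : ℕ, Nat.card Q = 2 ^ (m + 2) ∧
      Nonempty (Q ≃+ (Fin m → ZMod 2) × ZMod 4) := by
  letI : Module (ZMod 4) Q := AddCommGroup.zmodModule h4
  have hcast : ∀ (k : ℕ) (q : Q), ((k : ZMod 4)) • q = k • q := fun k q =>
    Nat.cast_smul_eq_nsmul _ _ _
  have hu2 : (2 : ZMod 4) • u = q0 := by
    have : ((2 : ℕ) : ZMod 4) = (2 : ZMod 4) := by decide
    rw [← this, hcast]; exact hu
  have hu0 : u ≠ 0 := fun h => hq0 (by rw [← hu, h, smul_zero])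
  have hq0' : (2 : ZMod 4) • q0 = 0 := by
    rw [← hu2, smul_smul]
    have : (2 : ZMod 4) * 2 = 0 := by decide
    rw [this, zero_smul]
  have hinj : Function.Injective (LinearMap.toSpanSingleton (ZMod 4) Q u) := by
    have hall4 : ∀ y : ZMod 4, y = 0 ∨ y = 1 ∨ y = 2 ∨ y = 3 := by decide
    have hker : ∀ r : ZMod 4, r • u = 0 → r = 0 := by
      intro r hr
      rcases hall4 r with h | h | h | h
      · exact h
      · exact absurd (by simpa [h] using hr) hu0
      · rw [h, hu2] at hr; exact absurd hr hq0
      · exfalso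
        apply hq0
        have h3 : (3 : ZMod 4) = 2 + 1 := by decide
        rw [h, h3, add_smul, one_smul, hu2] at hr
        have := congrArg (fun z => (2 : ZMod 4) • z) hr
        simpa [smul_add, hq0', hu2] using this
    intro a b hab
    have h0 : (a - b) • u = 0 := by
      rw [sub_smul, sub_eq_zero]
      exact hab
    have := hker _ h0
    rwa [sub_eq_zero] at this
  obtain ⟨h, hh⟩ := (baer_zmod4.injective).out
    (LinearMap.toSpanSingleton (ZMod 4) Q u) hinj LinearMap.id
  have hu1 : h u = 1 := by simpa using hh 1
  have hhq0 : h q0 = 2 := by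
    rw [← hu2, map_smul, hu1, smul_eq_mul, mul_one]
  -- the equivalence Q ≃+ ker h × ZMod 4
  let K := LinearMap.ker h
  have hKmem : ∀ q : Q, q - h q • u ∈ K := by
    intro q
    simp [K, LinearMap.mem_ker, map_sub, map_smul, hu1, smul_eq_mul]
  let e : Q ≃+ K × ZMod 4 :=
  { toFun := fun q => (⟨q - h q • u, hKmem q⟩, h q)
    invFun := fun p => p.1.1 + p.2 • u
    left_inv := fun q => by simp
    right_inv := fun p => by
      have hp1 : h p.1.1 = 0 := p.1.2
      ext
      · simp [hp1, hu1, smul_eq_mul]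
      · simp [hp1, hu1, smul_eq_mul]
    map_add' := fun q q' => by
      ext
      · show q + q' - h (q + q') • u = q - h q • u + (q' - h q' • u)
        rw [map_add, add_smul]
        abel
      · exact map_add h q q' }
  -- K is 2-torsion
  have hK2 : ∀ x : K, 2 • x = 0 := by
    intro x
    rcases h2 x.1 with hx | hx
    · ext
      simpa using hx
    · exfalso
      have h1 : h ((2 : ℕ) • x.1) = 0 := by
        rw [map_nsmul]
        have : h x.1 = 0 := x.2
        rw [this, smul_zero]
      rw [hx, hhq0] at h1
      exact absurd h1 (by decide)
  letI : Module (ZMod 2) K := AddCommGroup.zmodModule hK2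
  haveI : Module.Finite (ZMod 2) K := Module.Finite.of_finite
  let b := Module.finBasis (ZMod 2) K
  refine ⟨Module.finrank (ZMod 2) K, ?_, ?_⟩
  · have h1 : Nat.card Q = Nat.card (K × ZMod 4) := Nat.card_congr e.toEquiv
    have h2' : Nat.card K = 2 ^ Module.finrank (ZMod 2) K := by
      rw [Nat.card_congr b.equivFun.toEquiv]
      simp [Nat.card_eq_fintype_card]
    rw [h1, Nat.card_prod, h2']
    simp [Nat.card_eq_fintype_card, pow_succ]
    ring
  · exact ⟨e.trans (AddEquiv.prodCongr b.equivFun.toAddEquiv (AddEquiv.refl _))⟩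

/-- If `f : (ℤ/2)^r → (ℤ/2)^s ⊕ ℤ/4` is injective, the cokernel of `f` has
2-rank at most `s + 1 − r`, and the image of `f` does not contain twice the
generator of the `ℤ/4` summand, then `coker f ≅ (ℤ/2)^{s−r} ⊕ ℤ/4`. -/
theorem stmt11 (r s : ℕ)
    (f : (Fin r → ZMod 2) →+ (Fin s → ZMod 2) × ZMod 4)
    (hinj : Function.Injective f)
    (hrank : Module.rank (ZMod 2)
        (TensorProduct ℤ (ZMod 2) ((((Fin s → ZMod 2) × ZMod 4)) ⧸ f.range))
      ≤ s + 1 - r)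
    (hgen : ((0, (2 : ZMod 4)) : (Fin s → ZMod 2) × ZMod 4) ∉ f.range) :
    Nonempty ((((Fin s → ZMod 2) × ZMod 4) ⧸ f.range)
      ≃+ (Fin (s - r) → ZMod 2) × ZMod 4) := by
  classical
  set G := (Fin s → ZMod 2) × ZMod 4 with hG
  set N := f.range with hN
  set Q := G ⧸ N with hQ
  set q0 : Q := QuotientAddGroup.mk ((0, 2) : G) with hq0def
  set u : Q := QuotientAddGroup.mk ((0, 1) : G) with hudef
  have hq0 : q0 ≠ 0 := by
    rw [hq0def, Ne, QuotientAddGroup.eq_zero_iff]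
    exact hgen
  have hu : 2 • u = q0 := by
    rw [hudef, hq0def, ← QuotientAddGroup.mk_nsmul]
    have hsm : (2 : ℕ) • ((0, 1) : G) = ((0, 2) : G) := by
      ext i
      · simp
      · show (2 : ℕ) • (1 : ZMod 4) = 2
        decide
    rw [hsm]
  have h4 : ∀ q : Q, 4 • q = 0 := by
    intro q
    induction q using QuotientAddGroup.induction_on with
    | H x =>
      rw [← QuotientAddGroup.mk_nsmul]
      have : (4 : ℕ) • x = 0 := by
        ext i
        · show (4 : ℕ) • (x.1 i) = 0
          revert x
          intro x
          generalize x.1 i = c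
          revert c; decide
        · show (4 : ℕ) • x.2 = 0
          generalize x.2 = c
          revert c; decide
      rw [this]
      rfl
  have h2 : ∀ q : Q, 2 • q = 0 ∨ 2 • q = q0 := by
    intro q
    induction q using QuotientAddGroup.induction_on with
    | H x =>
      rw [← QuotientAddGroup.mk_nsmul]
      have hx1 : (2 : ℕ) • x.1 = 0 := by
        ext i
        show (2 : ℕ) • (x.1 i) = 0
        generalize x.1 i = c
        revert c; decide
      have hx2 : (2 : ℕ) • x.2 = 0 ∨ (2 : ℕ) • x.2 = 2 := by
        generalize x.2 = c
        revert c; decide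
      rcases hx2 with h | h
      · left
        have : (2 : ℕ) • x = 0 := by
          ext i
          · exact congrFun hx1 i
          · exact h
        rw [this]; rfl
      · right
        rw [hq0def]
        congr 1
        ext i
        · exact congrFun hx1 i
        · exact h
  obtain ⟨m, hcard, ⟨e⟩⟩ := key_classification Q q0 u hq0 hu h4 h2
  have hcardG : Nat.card G = 2 ^ (s + 2) := by
    simp [hG, Nat.card_eq_fintype_card]
    try ring
  have hcardN : Nat.card N = 2 ^ r := by
    rw [← Nat.card_congr (AddMonoidHom.ofInjective hinj).toEquiv]
    simp [Nat.card_eq_fintype_card]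
  have hsplit : Nat.card G = Nat.card Q * Nat.card N :=
    AddSubgroup.card_eq_card_quotient_mul_card_addSubgroup N
  rw [hcardG, hcardN, hcard, ← pow_add] at hsplit
  have hexp : s + 2 = m + 2 + r := Nat.pow_right_injective (by norm_num) hsplit
  have hm : m = s - r := by omega
  subst hm
  exact ⟨e⟩
end

section
/- Let R = ℤ[x̃, z̃]/I where deg z̃ = 2, deg x̃ = n−1 for n = 2a+1 odd (a ≥ 1), and I is the ideal generated by x̃², x̃·z̃^a, and z̃^a − 2x̃. Then the degree-k components of R are as follows: R^k ≅ ℤ generated by z̃^{k/2} for even k with 0 ≤ k < n−1; R^{n−1} ≅ ℤ generated by x̃ (with z̃^a = 2x̃); R^k ≅ ℤ generated by x̃·z̃^{(k−n+1)/2} for even k with n−1 < k ≤ 2n−4; and R^k = 0 for all other k. -/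
open MvPolynomial

namespace Stmt14Aux

noncomputable section

abbrev P := MvPolynomial (Fin 2) ℤ

lemma d_decomp (d : Fin 2 →₀ ℕ) : d = Finsupp.single 0 (d 0) + Finsupp.single 1 (d 1) := by
  ext x; fin_cases x <;> simp [Finsupp.single_apply]

lemma weight_eq (a : ℕ) (d : Fin 2 →₀ ℕ) :
    (Finsupp.weight ![2*a,2]) d = 2*(a * d 0) + 2 * d 1 := by
  rw [Finsupp.weight_apply, Finsupp.sum_fintype]
  · simp only [Fin.sum_univ_two, smul_eq_mul, Matrix.cons_val_zero, Matrix.cons_val_one,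
      Matrix.head_cons]
    ring
  · intro i; simp

lemma mono_eq (i j : ℕ) :
    (monomial (Finsupp.single 0 i + Finsupp.single 1 j) 1 : P) = X 0 ^ i * X 1 ^ j := by
  rw [MvPolynomial.X_pow_eq_monomial, MvPolynomial.X_pow_eq_monomial, monomial_mul, one_mul]

lemma smul_mk (I : Ideal P) (c : ℤ) (p : P) :
    c • Ideal.Quotient.mk I p = Ideal.Quotient.mk I (MvPolynomial.C c * p) := by
  rw [map_mul, zsmul_eq_mul]; congr 1

variable (a : ℕ)

abbrev Ia : Ideal P := Ideal.span {(X 0) ^ 2, X 0 * (X 1) ^ a, (X 1) ^ a - 2 * X 0}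

lemma mem1 : (X 0 : P) ^ 2 ∈ Ia a := Ideal.subset_span (by simp)
lemma mem2 : (X 0 : P) * (X 1) ^ a ∈ Ia a := Ideal.subset_span (by simp)
lemma mem3 : ((X 1) ^ a - 2 * X 0 : P) ∈ Ia a := Ideal.subset_span (by simp)

lemma mono_mem (i j : ℕ) (h : 2 ≤ i ∨ (i = 1 ∧ a ≤ j) ∨ (i = 0 ∧ 2*a ≤ j)) :
    (X 0 ^ i * X 1 ^ j : P) ∈ Ia a := by
  rcases h with h | ⟨rfl, h⟩ | ⟨rfl, h⟩
  · obtain ⟨i', rfl⟩ : ∃ i', i = 2 + i' := ⟨i - 2, by omega⟩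
    have : (X 0 ^ (2 + i') * X 1 ^ j : P) = (X 0 ^ i' * X 1 ^ j) * (X 0)^2 := by ring
    rw [this]; exact Ideal.mul_mem_left _ _ (mem1 a)
  · obtain ⟨j', rfl⟩ : ∃ j', j = a + j' := ⟨j - a, by omega⟩
    have : (X 0 ^ 1 * X 1 ^ (a + j') : P) = X 1 ^ j' * (X 0 * X 1 ^ a) := by ring
    rw [this]; exact Ideal.mul_mem_left _ _ (mem2 a)
  · have h2a : ((X 1 : P) ^ (2*a)) ∈ Ia a := by
      have : ((X 1 : P) ^ (2*a)) = ((X 1)^a - 2 * X 0) * (X 1)^a + 2 * (X 0 * (X 1)^a) := by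
        ring
      rw [this]
      exact Ideal.add_mem _ (Ideal.mul_mem_right _ _ (mem3 a))
        (Ideal.mul_mem_left _ _ (mem2 a))
    obtain ⟨j', rfl⟩ : ∃ j', j = 2*a + j' := ⟨j - 2*a, by omega⟩
    have : (X 0 ^ 0 * X 1 ^ (2*a + j') : P) = X 1 ^ j' * X 1 ^ (2*a) := by ring
    rw [this]; exact Ideal.mul_mem_left _ _ h2a

lemma qrel2 (j : ℕ) : Ideal.Quotient.mk (Ia a) (X 1 ^ (a + j)) =
    (2 : ℤ) • Ideal.Quotient.mk (Ia a) (X 0 * X 1 ^ j) := by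
  rw [smul_mk, Ideal.Quotient.eq]
  have hC : (MvPolynomial.C (2:ℤ) : P) = 2 := by norm_num
  have : (X 1 ^ (a + j) - MvPolynomial.C 2 * (X 0 * X 1 ^ j) : P)
      = ((X 1)^a - 2 * X 0) * X 1 ^ j := by
    rw [hC]; ring
  rw [this]; exact Ideal.mul_mem_right _ _ (mem3 a)

/-! ### Torsion-freeness via evaluation in `ℚ[t]/(t^(2a))` -/

abbrev Qr := AdjoinRoot ((Polynomial.X : Polynomial ℚ) ^ (2*a))

def rt : Qr a := AdjoinRoot.root _

def uu : Qr a := algebraMap ℚ (Qr a) (1/2)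

lemma rt_pow_ne (j : ℕ) (h : j < 2*a) : (rt a)^j ≠ 0 := by
  rw [rt, ← AdjoinRoot.mk_X, ← map_pow, Ne, AdjoinRoot.mk_eq_zero]
  intro hdvd
  have := Polynomial.natDegree_le_of_dvd hdvd (pow_ne_zero _ Polynomial.X_ne_zero)
  simp at this; omega

lemma rt_pow_top : (rt a)^(2*a) = 0 := by
  rw [rt, ← AdjoinRoot.mk_X, ← map_pow, AdjoinRoot.mk_self]

def φ : P →ₐ[ℤ] Qr a := MvPolynomial.aeval ![uu a * (rt a)^a, rt a]

lemma φ_X0 : φ a (X 0) = uu a * (rt a)^a := by simp [φ]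

lemma φ_X1 : φ a (X 1) = rt a := by simp [φ]

lemma uu_unit : IsUnit (uu a) := by
  rw [uu]; exact (IsUnit.map _ (isUnit_iff_ne_zero.mpr (by norm_num : (1/2 : ℚ) ≠ 0)))

lemma I_le_ker : Ia a ≤ RingHom.ker (φ a).toRingHom := by
  rw [Ideal.span_le]
  rintro p hp
  simp only [Set.mem_insert_iff, Set.mem_singleton_iff] at hp
  rcases hp with rfl | rfl | rfl <;>
    simp only [SetLike.mem_coe, RingHom.mem_ker, AlgHom.toRingHom_eq_coe,
      RingHom.coe_coe, map_mul, map_pow, map_sub, φ_X0, φ_X1, map_ofNat]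
  · rw [show (uu a * rt a ^ a)^2 = (uu a)^2 * (rt a)^(2*a) by ring, rt_pow_top, mul_zero]
  · rw [show uu a * rt a ^ a * rt a ^ a = uu a * (rt a)^(2*a) by ring, rt_pow_top, mul_zero]
  · have h1 : (uu a) * (2 : Qr a) = 1 := by
      rw [uu, show (2 : Qr a) = algebraMap ℚ (Qr a) 2 from (map_ofNat _ 2).symm, ← map_mul]
      norm_num
    have h2 : (2 : Qr a) * (uu a * (rt a)^a) = (rt a)^a := by
      rw [← mul_assoc, mul_comm (2 : Qr a), h1, one_mul]
    rw [h2, sub_self]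

lemma φ_mono_ne (i j : ℕ) (hj : a*i + j < 2*a) :
    φ a (X 0 ^ i * X 1 ^ j) ≠ 0 := by
  have h : φ a (X 0 ^ i * X 1 ^ j) = (uu a)^i * (rt a)^(a*i + j) := by
    rw [map_mul, map_pow, map_pow, φ_X0, φ_X1, mul_pow, ← pow_mul, pow_add,
      mul_assoc, mul_comm a i]
  rw [h]
  intro h0
  exact rt_pow_ne a _ hj (((uu_unit a).pow i).mul_right_eq_zero.mp h0)

lemma torsion_free (c : ℤ) (p : P) (hp : φ a p ≠ 0)
    (h : c • Ideal.Quotient.mk (Ia a) p = 0) : c = 0 := by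
  rw [smul_mk, Ideal.Quotient.eq_zero_iff_mem] at h
  have h0 : φ a (MvPolynomial.C c * p) = 0 := I_le_ker a h
  rw [map_mul] at h0
  have hc : φ a (MvPolynomial.C c) = algebraMap ℚ (Qr a) (c : ℚ) := by
    simp [φ, MvPolynomial.aeval_C, map_intCast, algebraMap_int_eq]
  rw [hc] at h0
  by_contra hcne
  have hu : IsUnit (algebraMap ℚ (Qr a) (c : ℚ)) :=
    IsUnit.map _ (isUnit_iff_ne_zero.mpr (by exact_mod_cast hcne))
  exact hp (by rwa [hu.mul_right_eq_zero] at h0)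

lemma span_equiv_int (I : Ideal P) (x : P ⧸ I)
    (hx : ∀ c : ℤ, c • x = 0 → c = 0) : Nonempty (Submodule.span ℤ {x} ≃ₗ[ℤ] ℤ) := by
  have hinj : Function.Injective (LinearMap.toSpanSingleton ℤ _ x) := by
    rw [← LinearMap.ker_eq_bot, LinearMap.ker_eq_bot']
    intro c hc; exact hx c (by simpa [LinearMap.toSpanSingleton_apply] using hc)
  exact ⟨(LinearEquiv.ofEq _ _ (LinearMap.span_singleton_eq_range ℤ _ x)).trans
    (LinearEquiv.ofInjective _ hinj).symm⟩

lemma map_le_span (I : Ideal P) (w : Fin 2 → ℕ) (k : ℕ) (v : P ⧸ I)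
    (h : ∀ d : Fin 2 →₀ ℕ, Finsupp.weight w d = k →
      Ideal.Quotient.mk I (monomial d 1) ∈ Submodule.span ℤ {v}) :
    Submodule.map (Ideal.Quotient.mkₐ ℤ I).toLinearMap
      (weightedHomogeneousSubmodule ℤ w k) ≤ Submodule.span ℤ {v} := by
  rintro _ ⟨p, hp, rfl⟩
  have hp' : p.IsWeightedHomogeneous w k := hp
  have hps : (Ideal.Quotient.mkₐ ℤ I).toLinearMap p =
      ∑ d ∈ p.support, (coeff d p) • Ideal.Quotient.mk I (monomial d 1) := by
    conv_lhs => rw [p.as_sum]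
    rw [map_sum]
    refine Finset.sum_congr rfl fun d _ => ?_
    rw [show (monomial d (coeff d p) : P) = (coeff d p) • monomial d 1 by
      rw [smul_monomial, smul_eq_mul, mul_one], map_smul]
    rfl
  rw [hps]
  exact Submodule.sum_mem _ fun d hd =>
    Submodule.smul_mem _ _ (h d (hp' (mem_support_iff.mp hd)))

lemma span_le_map (I : Ideal P) (w : Fin 2 → ℕ) (k : ℕ) (p : P)
    (hp : p ∈ weightedHomogeneousSubmodule ℤ w k) :
    Submodule.span ℤ {Ideal.Quotient.mk I p} ≤
      Submodule.map (Ideal.Quotient.mkₐ ℤ I).toLinearMap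
        (weightedHomogeneousSubmodule ℤ w k) := by
  rw [Submodule.span_le, Set.singleton_subset_iff]
  exact ⟨p, hp, rfl⟩

lemma whs_X1_pow (t : ℕ) :
    ((X 1 : P) ^ t) ∈ weightedHomogeneousSubmodule ℤ ![2*a,2] (2*t) := by
  rw [mem_weightedHomogeneousSubmodule, MvPolynomial.X_pow_eq_monomial]
  exact isWeightedHomogeneous_monomial _ _ _ (by rw [weight_eq]; simp [Finsupp.single_apply])

lemma whs_X0 : (X 0 : P) ∈ weightedHomogeneousSubmodule ℤ ![2*a,2] (2*a) := by
  rw [mem_weightedHomogeneousSubmodule,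
    show (X 0 : P) = monomial (Finsupp.single 0 1) 1 by
      rw [← MvPolynomial.X_pow_eq_monomial, pow_one]]
  exact isWeightedHomogeneous_monomial _ _ _
    (by rw [weight_eq]; simp [Finsupp.single_apply])

lemma whs_X0_X1 (j : ℕ) :
    ((X 0 : P) * X 1 ^ j) ∈ weightedHomogeneousSubmodule ℤ ![2*a,2] (2*a + 2*j) := by
  rw [mem_weightedHomogeneousSubmodule, show ((X 0 : P) * X 1 ^ j) =
    monomial (Finsupp.single 0 1 + Finsupp.single 1 j) 1 by rw [mono_eq, pow_one]]
  refine isWeightedHomogeneous_monomial _ _ _ ?_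
  rw [weight_eq]
  simp [Finsupp.single_apply, mul_add]

end

end Stmt14Aux

open Stmt14Aux

/-- Graded components of `R = ℤ[x̃, z̃]/(x̃², x̃·z̃^a, z̃^a − 2x̃)` with
`deg z̃ = 2` and `deg x̃ = n − 1 = 2a` for odd `n = 2a+1`, `a ≥ 1`:
`R^k ≅ ℤ` generated by `z̃^{k/2}` for even `k < n−1`; `R^{n−1} ≅ ℤ` generated by
`x̃`, with `z̃^a = 2x̃`; `R^k ≅ ℤ` generated by `x̃·z̃^{(k−n+1)/2}` for even `k`
with `n−1 < k ≤ 2n−4`; and `R^k = 0` otherwise. -/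
theorem stmt14 (a : ℕ) (ha : 1 ≤ a)
    (I : Ideal (MvPolynomial (Fin 2) ℤ))
    (hI : I = Ideal.span {(X 0) ^ 2, X 0 * (X 1) ^ a, (X 1) ^ a - 2 * X 0})
    (w : Fin 2 → ℕ) (hw : w = ![2 * a, 2])
    (comp : ℕ → Submodule ℤ (MvPolynomial (Fin 2) ℤ ⧸ I))
    (hcomp : ∀ k, comp k = Submodule.map (Ideal.Quotient.mkₐ ℤ I).toLinearMap
      (weightedHomogeneousSubmodule ℤ w k))
    (q : MvPolynomial (Fin 2) ℤ → MvPolynomial (Fin 2) ℤ ⧸ I)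
    (hq : q = Ideal.Quotient.mk I) :
    (∀ k : ℕ, Even k → k < 2 * a →
      comp k = Submodule.span ℤ {q ((X 1) ^ (k / 2))} ∧
        Nonempty ((comp k) ≃ₗ[ℤ] ℤ)) ∧
    (comp (2 * a) = Submodule.span ℤ {q (X 0)} ∧
      Nonempty ((comp (2 * a)) ≃ₗ[ℤ] ℤ) ∧ q ((X 1) ^ a) = 2 • q (X 0)) ∧
    (∀ k : ℕ, Even k → 2 * a < k → k ≤ 4 * a - 2 →
      comp k = Submodule.span ℤ {q (X 0 * (X 1) ^ ((k - 2 * a) / 2))} ∧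
        Nonempty ((comp k) ≃ₗ[ℤ] ℤ)) ∧
    (∀ k : ℕ, (¬ Even k ∨ 4 * a - 2 < k) → comp k = ⊥) := by
  subst hI hw hq
  have key : ∀ (d : Fin 2 →₀ ℕ), (monomial d 1 : P) = X 0 ^ (d 0) * X 1 ^ (d 1) := by
    intro d; conv_lhs => rw [d_decomp d]
    rw [mono_eq]
  -- Part 1 : k even, k < 2a
  have part1 : ∀ k : ℕ, Even k → k < 2 * a →
      comp k = Submodule.span ℤ {Ideal.Quotient.mk (Ia a) ((X 1) ^ (k / 2))} := by
    intro k hk hlt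
    obtain ⟨t, rfl⟩ := hk
    have ht : (t + t) / 2 = t := by omega
    rw [hcomp, ht]
    refine le_antisymm (map_le_span _ _ _ _ ?_) ?_
    · intro d hd
      rw [weight_eq] at hd
      have h0 : d 0 = 0 := by
        rcases Nat.eq_zero_or_pos (d 0) with h | h
        · exact h
        · exfalso; have := Nat.le_mul_of_pos_right a h; omega
      rw [h0, mul_zero] at hd
      have h1 : d 1 = t := by omega
      rw [key, h0, h1, pow_zero, one_mul]
      exact Submodule.mem_span_singleton_self _
    · exact span_le_map _ _ _ _ (by simpa [two_mul] using whs_X1_pow a t)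
  have part2span : comp (2*a) = Submodule.span ℤ {Ideal.Quotient.mk (Ia a) (X 0)} := by
    rw [hcomp]
    refine le_antisymm (map_le_span _ _ _ _ ?_) ?_
    · intro d hd
      rw [weight_eq] at hd
      have h01 : d 0 = 0 ∨ d 0 = 1 := by
        by_contra hcon
        push_neg at hcon
        have h2 : 2 ≤ d 0 := by omega
        have := Nat.mul_le_mul_left a h2
        omega
      rcases h01 with h0 | h0
      · rw [h0, mul_zero] at hd
        have h1 : d 1 = a := by omega
        rw [key, h0, h1, pow_zero, one_mul]
        have h := qrel2 a 0
        rw [pow_zero, mul_one, add_zero] at h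
        rw [h]
        exact Submodule.smul_mem _ _ (Submodule.mem_span_singleton_self _)
      · rw [h0, mul_one] at hd
        have h1 : d 1 = 0 := by omega
        rw [key, h0, h1, pow_zero, mul_one, pow_one]
        exact Submodule.mem_span_singleton_self _
    · exact span_le_map _ _ _ _ (whs_X0 a)
  have part3span : ∀ k : ℕ, Even k → 2 * a < k → k ≤ 4 * a - 2 →
      comp k = Submodule.span ℤ
        {Ideal.Quotient.mk (Ia a) (X 0 * (X 1) ^ ((k - 2 * a) / 2))} := by
    intro k hk hlt hle
    obtain ⟨t, rfl⟩ := hk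
    have ht : (t + t - 2*a) / 2 = t - a := by omega
    rw [hcomp, ht]
    refine le_antisymm (map_le_span _ _ _ _ ?_) ?_
    · intro d hd
      rw [weight_eq] at hd
      have h01 : d 0 = 0 ∨ d 0 = 1 := by
        by_contra hcon
        push_neg at hcon
        have h2 : 2 ≤ d 0 := by omega
        have := Nat.mul_le_mul_left a h2
        omega
      rcases h01 with h0 | h0
      · rw [h0, mul_zero] at hd
        have h1 : d 1 = t := by omega
        rw [key, h0, h1, pow_zero, one_mul]
        have h := qrel2 a (t - a)
        rw [show a + (t - a) = t by omega] at h
        rw [h]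
        exact Submodule.smul_mem _ _ (Submodule.mem_span_singleton_self _)
      · rw [h0, mul_one] at hd
        have h1 : d 1 = t - a := by omega
        rw [key, h0, h1, pow_one]
        exact Submodule.mem_span_singleton_self _
    · refine span_le_map _ _ _ _ ?_
      have h := whs_X0_X1 a (t - a)
      rwa [show 2*a + 2*(t-a) = t + t by omega] at h
  have part4 : ∀ k : ℕ, (¬ Even k ∨ 4 * a - 2 < k) → comp k = ⊥ := by
    intro k hk
    rw [hcomp]
    refine le_antisymm ?_ bot_le
    have hms := map_le_span (Ia a) ![2*a,2] k 0 ?_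
    · rwa [Submodule.span_zero_singleton] at hms
    · intro d hd
      rw [weight_eq] at hd
      rw [Submodule.span_zero_singleton, Submodule.mem_bot, Ideal.Quotient.eq_zero_iff_mem,
        key]
      rcases hk with hk | hk
      · exact absurd ⟨a * d 0 + d 1, by omega⟩ hk
      · apply mono_mem
        rcases Nat.lt_or_ge (d 0) 2 with h2 | h2
        · interval_cases h : d 0
          · right; right; exact ⟨rfl, by omega⟩
          · right; left; exact ⟨rfl, by omega⟩
        · left; exact h2
  have tf1 : ∀ j : ℕ, j < 2*a → ∀ c : ℤ,
      c • Ideal.Quotient.mk (Ia a) ((X 1 : P) ^ j) = 0 → c = 0 := by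
    intro j hj c hc
    refine torsion_free a c _ ?_ hc
    have h := φ_mono_ne a 0 j (by omega)
    rwa [pow_zero, one_mul] at h
  have tf2 : ∀ j : ℕ, j < a → ∀ c : ℤ,
      c • Ideal.Quotient.mk (Ia a) ((X 0 : P) * X 1 ^ j) = 0 → c = 0 := by
    intro j hj c hc
    refine torsion_free a c _ ?_ hc
    have h := φ_mono_ne a 1 j (by omega)
    rwa [pow_one] at h
  refine ⟨?_, ⟨part2span, ?_, ?_⟩, ?_, part4⟩
  · intro k hk hlt
    refine ⟨part1 k hk hlt, ?_⟩
    rw [part1 k hk hlt]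
    exact span_equiv_int _ _ (tf1 (k/2) (by omega))
  · rw [part2span]
    refine span_equiv_int _ _ ?_
    intro c hc
    refine tf2 0 (by omega) c ?_
    rwa [pow_zero, mul_one]
  · have h := qrel2 a 0
    rw [pow_zero, mul_one, add_zero] at h
    rw [h, two_zsmul, two_nsmul]
  · intro k hk hlt hle
    refine ⟨part3span k hk hlt hle, ?_⟩
    rw [part3span k hk hlt hle]
    exact span_equiv_int _ _ (tf2 ((k - 2*a)/2) (by omega))
end
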